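/- Let t: Dom(t) ⊆ E → F be a densely defined A-linear operator whose graph is orthogonally complemented in E ⊕ F. Then the domain Dom(t*) of the adjoint equals Ran(P_F P_{G(t)^⊥}), and (Ran(P_F P_{G(t)^⊥}))^⊥ = Ker(P_{G(t)^⊥} P_F*) where P_F* is the inclusion F → E ⊕ F. -/

import Mathlib

/- Framework: Hilbert C*-modules over a C*-algebra `A` (via Mathlib's `CStarModule`),
densely defined operators as `LinearPMap`s, `A`-valued orthogonality, adjoints,
regularity, graphs inside `E ⊕ F`. -/

open scoped InnerProductSpace RightActions WithCStarModule

/-- Mathlib's `CStarModule` as it was in December 2024 (right `A`-action via `SMul Aᵐᵒᵖ E`). -/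
class CStarModuleOld (A E : Type*) [NonUnitalSemiring A] [StarRing A]
    [Module ℂ A] [AddCommGroup E] [Module ℂ E] [PartialOrder A] [SMul Aᵐᵒᵖ E] [Norm A] [Norm E]
    extends Inner A E where
  inner_add_right {x} {y} {z} : inner x (y + z) = inner x y + inner x z
  inner_self_nonneg {x} : 0 ≤ inner x x
  inner_self {x} : inner x x = 0 ↔ x = 0
  inner_op_smul_right {a : A} {x y : E} : inner x (y <• a) = inner x y * a
  inner_smul_right_complex {z : ℂ} {x} {y} : inner x (z • y) = z • inner x y
  star_inner x y : star (inner x y) = inner y x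
  norm_eq_sqrt_norm_inner_self x : ‖x‖ = √‖inner x x‖

/-- The old `A`-valued inner product on the product module: `⟪x.1, y.1⟫ + ⟪x.2, y.2⟫`. -/
instance instInnerProdOld {A E F : Type*} [Add A] [Inner A E] [Inner A F] :
    Inner A (WithCStarModule A (E × F)) where
  inner x y := inner A (WithCStarModule.equiv A (E × F) x).1 (WithCStarModule.equiv A (E × F) y).1 +
    inner A (WithCStarModule.equiv A (E × F) x).2 (WithCStarModule.equiv A (E × F) y).2

namespace RegularOperators

variable (A : Type*) [NonUnitalCStarAlgebra A] [PartialOrder A] [StarOrderedRing A]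

section Defs

variable {E F : Type*}
  [NormedAddCommGroup E] [Module ℂ E] [SMul Aᵐᵒᵖ E] [CStarModuleOld A E]
  [NormedAddCommGroup F] [Module ℂ F] [SMul Aᵐᵒᵖ F] [CStarModuleOld A F]

/-- Orthogonal complement of a subset w.r.t. the `A`-valued inner product. -/
def ortho {E : Type*} [Inner A E] (S : Set E) : Set E := {y | ∀ u ∈ S, ⟪u, y⟫_A = 0}

/-- `S` is orthogonally complemented (an orthogonal summand): every element of `E`
decomposes as a sum of an element of `S` and an element of `S^⊥`. -/
def OrthoComplemented {E : Type*} [AddCommGroup E] [Inner A E] (S : Set E) : Prop := ∀ z : E, ∃ u ∈ S, ∃ v ∈ ortho A S, z = u + v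

/-- A partially defined operator is `A`-linear (for the right `A`-module action). -/
def AModuleMap (t : E →ₗ.[ℂ] F) : Prop :=
  ∀ (a : A) (x : t.domain), ∃ hx : (x : E) <• a ∈ t.domain, t ⟨(x : E) <• a, hx⟩ = (t x) <• a

/-- Kernel of a partially defined operator, as a subset of `E`. -/
def kerSet (t : E →ₗ.[ℂ] F) : Set E := {x | ∃ hx : x ∈ t.domain, t ⟨x, hx⟩ = 0}

/-- Range of a partially defined operator. -/
def ranSet (t : E →ₗ.[ℂ] F) : Set F := {y | ∃ x : t.domain, t x = y}

/-- Domain of the adjoint: those `y` for which some `z` satisfies `⟪tx, y⟫ = ⟪x, z⟫`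
for all `x` in the domain of `t`. -/
def adjDomain (t : E →ₗ.[ℂ] F) : Set F :=
  {y | ∃ z : E, ∀ x : t.domain, ⟪t x, y⟫_A = ⟪(x : E), z⟫_A}

/-- `s` is the adjoint operator `t*` of `t`. -/
structure IsAdjoint (t : E →ₗ.[ℂ] F) (s : F →ₗ.[ℂ] E) : Prop where
  dom : (s.domain : Set F) = adjDomain A t
  inner_eq : ∀ (x : t.domain) (y : s.domain), ⟪t x, (y : F)⟫_A = ⟪(x : E), s y⟫_A

/-- The range of `1 + t*t` (where `s` plays the role of `t*`). -/
def onePlusRange (t : E →ₗ.[ℂ] F) (s : F →ₗ.[ℂ] E) : Set E :=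
  {u | ∃ (x : t.domain) (h : t x ∈ s.domain), (x : E) + s ⟨t x, h⟩ = u}

/-- `t` is a regular operator with adjoint `s`: it is `A`-linear, densely defined,
closed, adjointable with densely defined adjoint, and `1 + t*t` has dense range. -/
structure IsRegular (t : E →ₗ.[ℂ] F) (s : F →ₗ.[ℂ] E) : Prop where
  amod : AModuleMap A t
  denseDom : Dense (t.domain : Set E)
  closedGraph : IsClosed (t.graph : Set (E × F))
  adj : IsAdjoint A t s
  denseAdjDom : Dense (s.domain : Set F)
  denseOnePlusRange : Dense (onePlusRange t s)

/-- The graph of `t` inside the Hilbert `A`-module `E ⊕ F`. -/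
def graphSet (t : E →ₗ.[ℂ] F) : Set (C⋆ᵐᵒᵈ(A, E × F)) :=
  {w | ∃ x : t.domain, WithCStarModule.equiv A (E × F) w = ((x : E), t x)}

/-- The range of `P_F ∘ P_{G(t)^⊥}`, i.e. the image of `G(t)^⊥ ⊆ E ⊕ F` under the
canonical projection onto `F`. -/
def pfRange (t : E →ₗ.[ℂ] F) : Set F :=
  {y | ∃ w ∈ ortho A (graphSet A t), (WithCStarModule.equiv A (E × F) w).2 = y}

end Defs

end RegularOperators

/-! `(z, y) ⊥ G(t)` says exactly that `⟪tx, y⟫ = ⟪x, -z⟫` for all `x ∈ Dom t`, so projecting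
`G(t)^⊥` to `F` gives `Dom(t*)`. For the second claim, `(0, y) ⊥ G(t)^⊥` iff `y ⊥ P_F(G(t)^⊥)`,
while the kernel of the projection onto `G(t)^⊥` is `G(t)^⊥⊥`: if `Pw = 0` then `w = w - Pw ∈ G(t)^⊥⊥`,
and if `w ∈ G(t)^⊥⊥` then so is `Pw = w - (w - Pw)`, which is then orthogonal to itself. -/

namespace CStarModuleOld

variable {A G : Type*} [NonUnitalCStarAlgebra A] [PartialOrder A]
  [NormedAddCommGroup G] [Module ℂ G] [SMul Aᵐᵒᵖ G] [CStarModuleOld A G]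

def innerRight (x : G) : G →+ A :=
  AddMonoidHom.mk' (inner A x) fun _ _ => inner_add_right

theorem inner_zero_right (x : G) : ⟪x, (0 : G)⟫_A = 0 :=
  map_zero (innerRight x)

theorem inner_neg_right (x y : G) : ⟪x, -y⟫_A = -⟪x, y⟫_A :=
  map_neg (innerRight x) y

theorem inner_sub_right (x y z : G) : ⟪x, y - z⟫_A = ⟪x, y⟫_A - ⟪x, z⟫_A :=
  map_sub (innerRight x) y z

end CStarModuleOld

namespace RegularOperators

variable {A : Type*} [NonUnitalCStarAlgebra A] [PartialOrder A] {E F : Type*}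
  [NormedAddCommGroup E] [Module ℂ E] [SMul Aᵐᵒᵖ E] [CStarModuleOld A E]
  [NormedAddCommGroup F] [Module ℂ F] [SMul Aᵐᵒᵖ F] [CStarModuleOld A F]

theorem prod_inner_def (v w : C⋆ᵐᵒᵈ(A, E × F)) : ⟪v, w⟫_A = ⟪v.1, w.1⟫_A + ⟪v.2, w.2⟫_A :=
  rfl

theorem prod_inner_sub_right (u v w : C⋆ᵐᵒᵈ(A, E × F)) :
    ⟪u, v - w⟫_A = ⟪u, v⟫_A - ⟪u, w⟫_A := by
  rw [prod_inner_def, prod_inner_def u v, prod_inner_def u w, WithCStarModule.sub_fst,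
    WithCStarModule.sub_snd, CStarModuleOld.inner_sub_right, CStarModuleOld.inner_sub_right]
  abel

theorem eq_zero_of_prod_inner_self_eq_zero [StarOrderedRing A] {w : C⋆ᵐᵒᵈ(A, E × F)}
    (h : ⟪w, w⟫_A = 0) : w = 0 := by
  obtain ⟨h₁, h₂⟩ := (add_eq_zero_iff_of_nonneg CStarModuleOld.inner_self_nonneg
    CStarModuleOld.inner_self_nonneg).mp h
  exact (WithCStarModule.equiv A (E × F)).injective
    (Prod.ext (CStarModuleOld.inner_self.mp h₁) (CStarModuleOld.inner_self.mp h₂))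

theorem sub_mem_ortho {S : Set C⋆ᵐᵒᵈ(A, E × F)} {v w : C⋆ᵐᵒᵈ(A, E × F)}
    (hv : v ∈ ortho A S) (hw : w ∈ ortho A S) : v - w ∈ ortho A S := fun u hu => by
  rw [prod_inner_sub_right, hv u hu, hw u hu, sub_zero]

theorem eq_zero_of_mem_ortho_of_mem_ortho_ortho [StarOrderedRing A]
    {S : Set C⋆ᵐᵒᵈ(A, E × F)} {w : C⋆ᵐᵒᵈ(A, E × F)}
    (h : w ∈ ortho A S) (h' : w ∈ ortho A (ortho A S)) : w = 0 :=
  eq_zero_of_prod_inner_self_eq_zero (h' w h)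

theorem apply_eq_zero_iff_mem_ortho_ortho [StarOrderedRing A] (S : Set C⋆ᵐᵒᵈ(A, E × F))
    (P : C⋆ᵐᵒᵈ(A, E × F) → C⋆ᵐᵒᵈ(A, E × F))
    (hP : ∀ w, P w ∈ ortho A S ∧ w - P w ∈ ortho A (ortho A S)) (w : C⋆ᵐᵒᵈ(A, E × F)) :
    P w = 0 ↔ w ∈ ortho A (ortho A S) := by
  refine ⟨fun h => by simpa [h] using (hP w).2, fun hw => ?_⟩
  have hPw : P w ∈ ortho A (ortho A S) := by
    simpa using sub_mem_ortho hw (hP w).2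
  exact eq_zero_of_mem_ortho_of_mem_ortho_ortho (hP w).1 hPw

theorem mk_zero_mem_ortho_iff (S : Set C⋆ᵐᵒᵈ(A, E × F)) (y : F) :
    (WithCStarModule.equiv A (E × F)).symm (0, y) ∈ ortho A S ↔
      y ∈ ortho A ((fun w => (WithCStarModule.equiv A (E × F) w).2) '' S) := by
  simp only [ortho, Set.mem_ofPred_eq, Set.forall_mem_image, prod_inner_def]
  simp [CStarModuleOld.inner_zero_right]

theorem mem_ortho_graphSet_iff (t : E →ₗ.[ℂ] F) (w : C⋆ᵐᵒᵈ(A, E × F)) :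
    w ∈ ortho A (graphSet A t) ↔ ∀ x : t.domain, ⟪(x : E), w.1⟫_A + ⟪t x, w.2⟫_A = 0 := by
  refine ⟨fun h x => h _ ⟨x, rfl⟩, ?_⟩
  rintro h u ⟨x, hx⟩
  obtain rfl := (Equiv.eq_symm_apply _).2 hx
  exact h x

theorem mem_adjDomain_iff_mem_pfRange (t : E →ₗ.[ℂ] F) (y : F) :
    y ∈ adjDomain A t ↔ y ∈ pfRange A t := by
  constructor
  · rintro ⟨z, hz⟩
    refine ⟨(WithCStarModule.equiv A (E × F)).symm (-z, y), ?_, rfl⟩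
    refine (mem_ortho_graphSet_iff t _).2 fun x => ?_
    change ⟪(x : E), -z⟫_A + ⟪t x, y⟫_A = 0
    rw [CStarModuleOld.inner_neg_right, hz x, neg_add_cancel]
  · rintro ⟨w, hw, rfl⟩
    refine ⟨-w.1, fun x => ?_⟩
    rw [CStarModuleOld.inner_neg_right]
    exact eq_neg_of_add_eq_zero_right ((mem_ortho_graphSet_iff t w).1 hw x)

end RegularOperators

open RegularOperators
variable {A : Type*} [NonUnitalCStarAlgebra A] [PartialOrder A] [StarOrderedRing A]
variable {E F : Type*}
  [NormedAddCommGroup E] [Module ℂ E] [SMul Aᵐᵒᵖ E] [CStarModuleOld A E] [CompleteSpace E]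
  [NormedAddCommGroup F] [Module ℂ F] [SMul Aᵐᵒᵖ F] [CStarModuleOld A F] [CompleteSpace F]

theorem adjDomain_eq_pfRange_general (t : E →ₗ.[ℂ] F)
    (P : C⋆ᵐᵒᵈ(A, E × F) → C⋆ᵐᵒᵈ(A, E × F))
    (hP : ∀ w, P w ∈ ortho A (graphSet A t) ∧
      w - P w ∈ ortho A (ortho A (graphSet A t))) :
    adjDomain A t = pfRange A t ∧
      ortho A (pfRange A t) =
        {y : F | P ((WithCStarModule.equiv A (E × F)).symm (0, y)) = 0} := by
  refine ⟨Set.ext fun y => mem_adjDomain_iff_mem_pfRange t y, Set.ext fun y => ?_⟩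
  exact (mk_zero_mem_ortho_iff _ y).symm.trans
    (apply_eq_zero_iff_mem_ortho_ortho _ P hP _).symm

/-- if the graph of a densely defined `A`-linear operator `t` is
orthogonally complemented in `E ⊕ F`, and `P` is the orthogonal projection onto
`G(t)^⊥`, then `Dom(t*) = Ran(P_F P_{G(t)^⊥})` and
`(Ran(P_F P_{G(t)^⊥}))^⊥ = Ker(P_{G(t)^⊥} ∘ P_F*)`, `P_F*` being the inclusion of `F`. -/
theorem adjDomain_eq_pfRange (t : E →ₗ.[ℂ] F)
    (hmod : AModuleMap A t) (hdense : Dense (t.domain : Set E))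
    (hgraph : OrthoComplemented A (graphSet A t))
    (P : C⋆ᵐᵒᵈ(A, E × F) → C⋆ᵐᵒᵈ(A, E × F))
    (hP : ∀ w, P w ∈ ortho A (graphSet A t) ∧
      w - P w ∈ ortho A (ortho A (graphSet A t))) :
    adjDomain A t = pfRange A t ∧
      ortho A (pfRange A t) =
        {y : F | P ((WithCStarModule.equiv A (E × F)).symm (0, y)) = 0} :=
  adjDomain_eq_pfRange_general t P hP
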